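/- Let α > -1, α ≠ -6/7, and let p be a bivariate polynomial of degree at most 2 on the reference triangle T (vertices v₁=(1,0), v₂=(0,1), v₃=(0,0)) whose Crouzeix–Raviart edge averages vanish: ∫₀¹ p(t v_{j+1}+(1-t)v_{j+2}) dt = 0 for j=1,2,3. Then the vector (p(v₁), p(v₂), p(v₃)) satisfies the linear system γ_α · M · (p(v₁),p(v₂),p(v₃))ᵀ = (F₁(p), F₂(p), F₃(p))ᵀ, where M is the 3×3 matrix with diagonal entries K_α = -α/(2α+3) and off-diagonal entries h_α = -(5α+6)/(4(2α+3)), γ_α = B(α+2,α+1), and F_j(p) = ∫₀¹ t^α(1-t)^α p(t v_j + (1-t)m_j) dt with m_j the midpoint of the edge opposite v_j. -/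

import Mathlib

/-!
Write `p = a + ℓ + Q` with `ℓ` linear and `Q` a quadratic form. Along a segment
`t ↦ t • u + (1 - t) • v`, `p` is a quadratic polynomial in `t` with leading coefficient
`Q (u - v)`. Hence the plain average of `p` over the segment is `(p u + p v) / 2 - Q (u - v) / 6`,
and, by the recurrence `(z₁ + z₂) B(z₁ + 1, z₂) = z₁ B(z₁, z₂)`, its average against
`t ^ α * (1 - t) ^ α` is `B(α + 2, α + 1) * (p u + p v - (α + 1) / (2α + 3) * Q (u - v))`.
Vanishing edge averages give `Q (v (j + 1) - v (j + 2)) = 3 * (p (v (j + 1)) + p (v (j + 2)))`,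
and Apollonius's identity expresses `Q` on a median through `Q` on the three edges.
-/

open MvPolynomial

noncomputable section

/-- Vertices of the reference triangle. -/
def vtx : Fin 3 → ℝ × ℝ := ![(1, 0), (0, 1), (0, 0)]

/-- Barycentric coordinates on the reference triangle. -/
def lam : Fin 3 → ℝ × ℝ → ℝ := ![fun q => q.1, fun q => q.2, fun q => 1 - q.1 - q.2]

/-- The AF3 basis functions φᵢ = λᵢ(1 - 3λ_{i+1} - 3λ_{i+2}). -/
def bphi (i : Fin 3) (q : ℝ × ℝ) : ℝ :=
  lam i q * (1 - 3 * lam (i + 1) q - 3 * lam (i + 2) q)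

/-- The AF3 basis functions ϕᵢ = 6 λ_{i+1} λ_{i+2}. -/
def sphi (i : Fin 3) (q : ℝ × ℝ) : ℝ := 6 * lam (i + 1) q * lam (i + 2) q

/-- Evaluation of a bivariate polynomial at a point of ℝ². -/
def evalP (p : MvPolynomial (Fin 2) ℝ) (q : ℝ × ℝ) : ℝ :=
  MvPolynomial.eval ![q.1, q.2] p

/-- Midpoint of the edge opposite vertex `j`. -/
def mid (j : Fin 3) : ℝ × ℝ := (1 / 2 : ℝ) • (vtx (j + 1) + vtx (j + 2))

/-- The Euler beta function. -/
def eulerBeta (z1 z2 : ℝ) : ℝ :=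
  ∫ u in (0:ℝ)..1, u ^ (z1 - 1) * (1 - u) ^ (z2 - 1)

open intervalIntegral
open MeasureTheory (volume)

lemma ofReal_rpow_mul_one_sub_rpow {x : ℝ} (hx : x ∈ Set.Icc (0:ℝ) 1) (z1 z2 : ℝ) :
    ((x ^ (z1 - 1) * (1 - x) ^ (z2 - 1) : ℝ) : ℂ) =
      (x : ℂ) ^ ((z1 : ℂ) - 1) * (1 - (x : ℂ)) ^ ((z2 : ℂ) - 1) := by
  push_cast [Complex.ofReal_cpow hx.1, Complex.ofReal_cpow (sub_nonneg.2 hx.2)]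
  rfl

lemma ofReal_eulerBeta (z1 z2 : ℝ) : (eulerBeta z1 z2 : ℂ) = Complex.betaIntegral z1 z2 := by
  rw [eulerBeta, Complex.betaIntegral, ← integral_ofReal]
  refine integral_congr fun x hx => ?_
  rw [Set.uIcc_of_le zero_le_one] at hx
  exact ofReal_rpow_mul_one_sub_rpow hx z1 z2

lemma intervalIntegrable_rpow_mul_one_sub_rpow {z1 z2 : ℝ} (h1 : 0 < z1) (h2 : 0 < z2) :
    IntervalIntegrable (fun t : ℝ => t ^ (z1 - 1) * (1 - t) ^ (z2 - 1)) volume 0 1 := by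
  have h := Complex.betaIntegral_convergent (u := z1) (v := z2) (by simpa) (by simpa)
  rw [intervalIntegrable_iff_integrableOn_Ioc_of_le zero_le_one] at h ⊢
  refine MeasureTheory.IntegrableOn.congr_fun h.re (fun x hx => ?_) measurableSet_Ioc
  simp [← ofReal_rpow_mul_one_sub_rpow (Set.Ioc_subset_Icc_self hx)]

lemma eulerBeta_add_one_left {z1 z2 : ℝ} (h1 : 0 < z1) (h2 : 0 < z2) :
    eulerBeta (z1 + 1) z2 = z1 / (z1 + z2) * eulerBeta z1 z2 := by
  have hz1 : (0:ℝ) < (z1 : ℂ).re := by simpa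
  have hz2 : (0:ℝ) < (z2 : ℂ).re := by simpa
  have hz12 : (0:ℝ) < ((z1:ℂ) + z2).re := by simpa using add_pos h1 h2
  have hΓ := Complex.Gamma_mul_Gamma_eq_betaIntegral hz1 hz2
  have hΓ1 := Complex.Gamma_mul_Gamma_eq_betaIntegral (s := z1 + 1)
    (by simpa using h1.trans (lt_add_one z1)) hz2
  rw [Complex.Gamma_add_one _ (Complex.ofReal_ne_zero.2 h1.ne'), add_right_comm,
    Complex.Gamma_add_one _ (ne_of_apply_ne Complex.re hz12.ne')] at hΓ1
  rw [div_mul_eq_mul_div, eq_div_iff (add_pos h1 h2).ne']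
  exact_mod_cast (show (eulerBeta (z1 + 1) z2 : ℂ) * (z1 + z2) = z1 * eulerBeta z1 z2 by
    push_cast [ofReal_eulerBeta]
    refine mul_left_cancel₀ (Complex.Gamma_ne_zero_of_re_pos hz12) ?_
    linear_combination (z1:ℂ) * hΓ - hΓ1)

lemma integral_rpow_mul_one_sub_rpow_mul_pow (α : ℝ) (k : ℕ) :
    ∫ t in (0:ℝ)..1, t ^ α * (1 - t) ^ α * t ^ k = eulerBeta (α + 1 + k) (α + 1) := by
  refine integral_congr_ae (.of_forall fun t ht => ?_)
  rw [Set.uIoc_of_le zero_le_one] at ht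
  rw [add_sub_cancel_right, add_right_comm, add_sub_cancel_right, Real.rpow_add_natCast ht.1.ne',
    mul_right_comm]

lemma integral_quadratic (A B C : ℝ) :
    ∫ t in (0:ℝ)..1, (A + B * t + C * t ^ 2) = A + B / 2 + C / 3 := by
  have hint {g : ℝ → ℝ} (hg : Continuous g) : IntervalIntegrable g volume 0 1 :=
    hg.intervalIntegrable 0 1
  rw [integral_add (hint (by fun_prop)) (hint (by fun_prop)),
    integral_add (hint (by fun_prop)) (hint (by fun_prop)), integral_const_mul, integral_const_mul]
  simp [integral_pow]
  ring

lemma integral_rpow_mul_one_sub_rpow_mul_quadratic {α : ℝ} (hα : -1 < α) (A B C : ℝ) :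
    ∫ t in (0:ℝ)..1, t ^ α * (1 - t) ^ α * (A + B * t + C * t ^ 2) =
      eulerBeta (α + 2) (α + 1) * (2 * A + B + (α + 2) / (2 * α + 3) * C) := by
  have hα1 : 0 < α + 1 := by linarith
  have hw : IntervalIntegrable (fun t : ℝ => t ^ α * (1 - t) ^ α) volume 0 1 := by
    simpa using intervalIntegrable_rpow_mul_one_sub_rpow hα1 hα1
  have hwk (k : ℕ) :
      IntervalIntegrable (fun t : ℝ => t ^ α * (1 - t) ^ α * t ^ k) volume 0 1 :=
    hw.mul_continuousOn (continuous_pow k).continuousOn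
  have hmom := integral_rpow_mul_one_sub_rpow_mul_pow α
  calc ∫ t in (0:ℝ)..1, t ^ α * (1 - t) ^ α * (A + B * t + C * t ^ 2)
      = ∫ t in (0:ℝ)..1, (A * (t ^ α * (1 - t) ^ α * t ^ 0)
          + B * (t ^ α * (1 - t) ^ α * t ^ 1) + C * (t ^ α * (1 - t) ^ α * t ^ 2)) := by
        congr! 2; ring
    _ = A * eulerBeta (α + 1) (α + 1) + B * eulerBeta (α + 2) (α + 1)
          + C * eulerBeta (α + 3) (α + 1) := by
      rw [integral_add (((hwk 0).const_mul A).add ((hwk 1).const_mul B)) ((hwk 2).const_mul C),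
        integral_add ((hwk 0).const_mul A) ((hwk 1).const_mul B), integral_const_mul,
        integral_const_mul, integral_const_mul, hmom, hmom, hmom]
      norm_num [add_assoc]
    _ = _ := by
      have hB2 : eulerBeta (α + 2) (α + 1) = eulerBeta (α + 1) (α + 1) / 2 := by
        rw [show α + 2 = α + 1 + 1 by ring, eulerBeta_add_one_left hα1 hα1]
        field_simp
        ring
      have hB3 :
          eulerBeta (α + 3) (α + 1) = (α + 2) / (2 * α + 3) * eulerBeta (α + 2) (α + 1) := by
        rw [show α + 3 = α + 2 + 1 by ring, eulerBeta_add_one_left (by linarith) hα1]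
        ring
      rw [hB3, hB2]
      ring

def quadraticFunctions (E : Type*) [AddCommGroup E] [Module ℝ E] : Submodule ℝ (E → ℝ) where
  carrier :=
    {f | ∃ (a : ℝ) (ℓ : E →ₗ[ℝ] ℝ) (Q : QuadraticForm ℝ E), ∀ x, f x = a + ℓ x + Q x}
  add_mem' := by
    rintro f g ⟨a, ℓ, Q, hf⟩ ⟨b, m, R, hg⟩
    refine ⟨a + b, ℓ + m, Q + R, fun x => ?_⟩
    simp only [Pi.add_apply, hf, hg, LinearMap.add_apply, add_apply]
    ring
  zero_mem' := ⟨0, 0, 0, fun x => by simp⟩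
  smul_mem' := by
    rintro c f ⟨a, ℓ, Q, hf⟩
    refine ⟨c * a, c • ℓ, c • Q, fun x => ?_⟩
    simp only [Pi.smul_apply, hf, LinearMap.smul_apply, smul_apply, smul_eq_mul]
    ring

lemma monomial_mem_quadraticFunctions {i k : ℕ} (h : i + k ≤ 2) :
    (fun q : ℝ × ℝ => q.1 ^ i * q.2 ^ k) ∈ quadraticFunctions (ℝ × ℝ) := by
  have hi : i ≤ 2 := by omega
  have hk : k ≤ 2 - i := by omega
  interval_cases i <;> interval_cases k
  · exact ⟨1, 0, 0, fun q => by simp⟩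
  · exact ⟨0, LinearMap.snd ℝ ℝ ℝ, 0, fun q => by simp⟩
  · exact ⟨0, 0, .linMulLin (LinearMap.snd ℝ ℝ ℝ) (LinearMap.snd ℝ ℝ ℝ), fun q => by simp [sq]⟩
  · exact ⟨0, LinearMap.fst ℝ ℝ ℝ, 0, fun q => by simp⟩
  · exact ⟨0, 0, .linMulLin (LinearMap.fst ℝ ℝ ℝ) (LinearMap.snd ℝ ℝ ℝ), fun q => by simp⟩
  · exact ⟨0, 0, .linMulLin (LinearMap.fst ℝ ℝ ℝ) (LinearMap.fst ℝ ℝ ℝ), fun q => by simp [sq]⟩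

lemma evalP_mem_quadraticFunctions {p : MvPolynomial (Fin 2) ℝ} (hp : p.totalDegree ≤ 2) :
    evalP p ∈ quadraticFunctions (ℝ × ℝ) := by
  have hsum :
      evalP p = ∑ d ∈ p.support, p.coeff d • fun q : ℝ × ℝ => q.1 ^ d 0 * q.2 ^ d 1 := by
    ext q
    simp [evalP, eval_eq', Fin.prod_univ_two]
  rw [hsum]
  refine Submodule.sum_mem _ fun d hd => Submodule.smul_mem _ _ (monomial_mem_quadraticFunctions ?_)
  simpa [Finsupp.sum_fintype, Fin.sum_univ_two] using (le_totalDegree hd).trans hp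

lemma QuadraticMap.apollonius {E : Type*} [AddCommGroup E] [Module ℝ E] (Q : QuadraticForm ℝ E)
    (a b c : E) :
    Q (a - (1 / 2 : ℝ) • (b + c)) = (2 * Q (a - b) + 2 * Q (a - c) - Q (b - c)) / 4 := by
  have hx : a - (1 / 2 : ℝ) • (b + c) = (1 / 2 : ℝ) • ((a - b) + (a - c)) := by module
  have hy : b - c = (a - c) + -(a - b) := by abel
  rw [hx, hy, Q.map_smul, QuadraticMap.map_add (⇑Q) (a - b), QuadraticMap.map_add (⇑Q) (a - c),
    polar_neg_right, Q.map_neg, polar_comm]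
  simp only [smul_eq_mul]
  ring

section QuadraticFunction

variable {E : Type*} [AddCommGroup E] [Module ℝ E]
  {f : E → ℝ} {a : ℝ} {ℓ : E →ₗ[ℝ] ℝ} {Q : QuadraticForm ℝ E}

lemma apply_smul_add_one_sub_smul (hf : ∀ x, f x = a + ℓ x + Q x) (u v : E) (t : ℝ) :
    f (t • u + (1 - t) • v) = f v + (f u - f v - Q (u - v)) * t + Q (u - v) * t ^ 2 := by
  have hu : u = v + (u - v) := by abel
  have ht : t • u + (1 - t) • v = v + t • (u - v) := by module
  rw [ht, hu, hf, hf, hf, add_sub_cancel_left]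
  simp only [map_add, map_smul, QuadraticMap.map_add (⇑Q) v, Q.map_smul, Q.polar_smul_right,
    smul_eq_mul]
  ring

lemma apply_midpoint (hf : ∀ x, f x = a + ℓ x + Q x) (u v : E) :
    f ((1 / 2 : ℝ) • (u + v)) = (f u + f v) / 2 - Q (u - v) / 4 := by
  rw [show (1 / 2 : ℝ) • (u + v) = (1 / 2 : ℝ) • u + (1 - 1 / 2 : ℝ) • v by module,
    apply_smul_add_one_sub_smul hf]
  ring

lemma integral_apply_segment (hf : ∀ x, f x = a + ℓ x + Q x) (u v : E) :
    ∫ t in (0:ℝ)..1, f (t • u + (1 - t) • v) = (f u + f v) / 2 - Q (u - v) / 6 := by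
  simp only [apply_smul_add_one_sub_smul hf, integral_quadratic]
  ring

lemma integral_rpow_mul_one_sub_rpow_mul_apply_segment {α : ℝ} (hα : -1 < α)
    (hf : ∀ x, f x = a + ℓ x + Q x) (u v : E) :
    ∫ t in (0:ℝ)..1, t ^ α * (1 - t) ^ α * f (t • u + (1 - t) • v) =
      eulerBeta (α + 2) (α + 1) * (f u + f v - (α + 1) / (2 * α + 3) * Q (u - v)) := by
  simp only [apply_smul_add_one_sub_smul hf, integral_rpow_mul_one_sub_rpow_mul_quadratic hα]
  have : α * 2 + 3 ≠ 0 := by linarith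
  field_simp
  ring

theorem integral_rpow_mul_one_sub_rpow_mul_apply_median {α : ℝ} (hα : -1 < α)
    (hf : ∀ x, f x = a + ℓ x + Q x) (v : Fin 3 → E)
    (hCR : ∀ j : Fin 3, ∫ t in (0:ℝ)..1, f (t • v (j + 1) + (1 - t) • v (j + 2)) = 0)
    (j : Fin 3) :
    eulerBeta (α + 2) (α + 1) *
        ((-α / (2 * α + 3)) * f (v j) +
          (-(5 * α + 6) / (4 * (2 * α + 3))) * (f (v (j + 1)) + f (v (j + 2)))) =
      ∫ t in (0:ℝ)..1,
        t ^ α * (1 - t) ^ α *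
          f (t • v j + (1 - t) • ((1 / 2 : ℝ) • (v (j + 1) + v (j + 2)))) := by
  have hedge (i : Fin 3) : Q (v (i + 1) - v (i + 2)) = 3 * (f (v (i + 1)) + f (v (i + 2))) := by
    linarith [integral_apply_segment hf (v (i + 1)) (v (i + 2)) ▸ hCR i]
  have hedge₁ := hedge (j + 1)
  have hedge₂ := hedge (j + 2)
  rw [show j + 1 + 1 = j + 2 by omega, show j + 1 + 2 = j by omega] at hedge₁
  rw [show j + 2 + 1 = j by omega, show j + 2 + 2 = j + 1 by omega] at hedge₂
  rw [integral_rpow_mul_one_sub_rpow_mul_apply_segment hα hf, apply_midpoint hf,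
    QuadraticMap.apollonius, QuadraticMap.map_sub Q (v j) (v (j + 2)), hedge j, hedge₁, hedge₂]
  have : α * 2 + 3 ≠ 0 := by linarith
  field_simp
  ring

end QuadraticFunction

theorem first_family_linear_system_general (α : ℝ) (hα : -1 < α)
    (p : MvPolynomial (Fin 2) ℝ) (hp : p.totalDegree ≤ 2)
    (hCR : ∀ j : Fin 3,
      (∫ t in (0:ℝ)..1, evalP p (t • vtx (j + 1) + (1 - t) • vtx (j + 2))) = 0) :
    ∀ j : Fin 3,
      eulerBeta (α + 2) (α + 1) *
        ((-α / (2 * α + 3)) * evalP p (vtx j) +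
         (-(5 * α + 6) / (4 * (2 * α + 3))) *
           (evalP p (vtx (j + 1)) + evalP p (vtx (j + 2)))) =
      ∫ t in (0:ℝ)..1, t ^ α * (1 - t) ^ α * evalP p (t • vtx j + (1 - t) • mid j) := by
  obtain ⟨a, ℓ, Q, hf⟩ := evalP_mem_quadraticFunctions hp
  exact integral_rpow_mul_one_sub_rpow_mul_apply_median hα hf vtx hCR

theorem first_family_linear_system (α : ℝ) (hα : -1 < α) (hα7 : α ≠ -6 / 7)
    (p : MvPolynomial (Fin 2) ℝ) (hp : p.totalDegree ≤ 2)
    (hCR : ∀ j : Fin 3,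
      (∫ t in (0:ℝ)..1, evalP p (t • vtx (j + 1) + (1 - t) • vtx (j + 2))) = 0) :
    ∀ j : Fin 3,
      eulerBeta (α + 2) (α + 1) *
        ((-α / (2 * α + 3)) * evalP p (vtx j) +
         (-(5 * α + 6) / (4 * (2 * α + 3))) *
           (evalP p (vtx (j + 1)) + evalP p (vtx (j + 2)))) =
      ∫ t in (0:ℝ)..1, t ^ α * (1 - t) ^ α * evalP p (t • vtx j + (1 - t) • mid j) :=
  first_family_linear_system_general α hα p hp hCR

end
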